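/- arXiv:1708.04488 — 2 statements merged into one kernel-verified Lean document; each statement's English description precedes it below -/
import Mathlib

section
/- Let p be an odd positive integer, let r,s ≥ 1 be integers, and set x = 2(r+s)−1. Define F on the disjoint union of the index sets {1,…,p}×{1,…,r}, {1,…,p}×{1,…,s}, and {1,…,p}×{1,…,r+s−1} by F(u-index (i,j)) = j + (i−1)·x, F(v-index (k,ℓ)) = (2r+s−1) + ℓ + (((p−1)/2 + k − 1) mod p)·x, and F(e-index (q,t)) = r + t + ((2p − 2q + 1) mod p)·x. Then F is a bijection onto {1, 2, …, x·p}. -/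
/-!
Cut `{1, …, x·p}` into `p` blocks of `x` consecutive labels, so that every label is uniquely
`a + 1 + b·x` with position `a < x` and block `b < p`. Inside every block the `u`-, `e`- and
`v`-labels occupy the disjoint position ranges `[0, r)`, `[r, 2r+s-1)` and `[2r+s-1, x)`, and each
of the three families visits every block exactly once: `i ↦ i` and `k ↦ (p-1)/2 + k mod p` are
rotations, and `q ↦ 2p - 2q - 1 mod p` is a bijection because `2` is invertible modulo the odd
number `p`. Injectivity and `x·p` labels in total give the bijection.
-/

open Function

lemma Nat.add_mul_eq_add_mul_iff {x a b m n : ℕ} (ha : a < x) (hb : b < x) :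
    a + m * x = b + n * x ↔ a = b ∧ m = n := by
  refine ⟨fun h => ?_, fun ⟨rfl, rfl⟩ => rfl⟩
  have hx : 0 < x := by omega
  have hmod := congrArg (· % x) h
  have hdiv := congrArg (· / x) h
  simp only [Nat.add_mul_mod_self_right, Nat.mod_eq_of_lt ha, Nat.mod_eq_of_lt hb] at hmod
  simp only [Nat.add_mul_div_right _ _ hx, Nat.div_eq_of_lt ha, Nat.div_eq_of_lt hb,
    zero_add] at hdiv
  exact ⟨hmod, hdiv⟩

lemma Nat.injective_add_mod {p : ℕ} (c : ℕ) : Injective (fun k : Fin p => (c + k) % p) :=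
  fun _ _ h => Fin.ext <|
    (Nat.ModEq.add_left_cancel' c h).eq_of_lt_of_lt (Fin.is_lt _) (Fin.is_lt _)

lemma Nat.injective_reflect_mod_of_odd {p : ℕ} (hp : Odd p) :
    Injective (fun q : Fin p => (2 * p - 2 * (q + 1) + 1) % p) := by
  intro q₁ q₂ h
  have hsum : ∀ q : Fin p, 2 * p - 2 * (q + 1) + 1 + (2 * q + 1) = 2 * p := fun q => by omega
  have hodd : 2 * (q₁ : ℕ) + 1 ≡ 2 * q₂ + 1 [MOD p] :=
    Nat.ModEq.add_left_cancel h (by rw [hsum, hsum])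
  have hq : (q₁ : ℕ) ≡ q₂ [MOD p] :=
    (Nat.ModEq.add_right_cancel' 1 hodd).cancel_left_of_coprime hp.coprime_two_right
  exact Fin.ext (hq.eq_of_lt_of_lt q₁.is_lt q₂.is_lt)

lemma Set.bijOn_univ_Icc_of_injective {α : Type*} [Fintype α] {f : α → ℕ} {N : ℕ}
    (hmaps : ∀ a, f a ∈ Set.Icc 1 N) (hinj : Injective f) (hcard : N ≤ Fintype.card α) :
    Set.BijOn f Set.univ (Set.Icc 1 N) := by
  refine ⟨fun a _ => hmaps a, hinj.injOn, ?_⟩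
  have := Finset.surjOn_of_injOn_of_card_le (s := Finset.univ) (t := Finset.Icc 1 N) f
    (fun a _ => by simpa using hmaps a) hinj.injOn (by simpa using hcard)
  simpa using this

section BlockLabel

variable {n m n' m' x c c' : ℕ}

/-- Copy `i` of a family of `m` consecutive labels, starting at position `c` of a block of
length `x`, placed in block `σ i`. -/
def blockLabel (x c : ℕ) (σ : Fin n → ℕ) (z : Fin n × Fin m) : ℕ :=
  c + (z.2 + 1) + σ z.1 * x

lemma blockLabel_eq_blockLabel_iff {σ : Fin n → ℕ} {τ : Fin n' → ℕ} (hc : c + m ≤ x)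
    (hc' : c' + m' ≤ x) {z : Fin n × Fin m} {w : Fin n' × Fin m'} :
    blockLabel x c σ z = blockLabel x c' τ w ↔ c + z.2 = c' + w.2 ∧ σ z.1 = τ w.1 := by
  have hz := z.2.is_lt
  have hw := w.2.is_lt
  rw [← Nat.add_mul_eq_add_mul_iff (x := x) (by omega) (by omega)]
  unfold blockLabel
  omega

lemma injective_blockLabel {σ : Fin n → ℕ} (hσ : Injective σ) (hc : c + m ≤ x) :
    Injective (blockLabel (m := m) x c σ) := fun _ _ h => by
  obtain ⟨h₂, h₁⟩ := (blockLabel_eq_blockLabel_iff hc hc).1 h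
  exact Prod.ext (hσ h₁) (Fin.ext (by omega))

lemma blockLabel_ne_of_le {σ : Fin n → ℕ} {τ : Fin n' → ℕ} (hcc' : c + m ≤ c')
    (hc' : c' + m' ≤ x) (z : Fin n × Fin m) (w : Fin n' × Fin m') :
    blockLabel x c σ z ≠ blockLabel x c' τ w := fun h => by
  have := ((blockLabel_eq_blockLabel_iff (by omega) hc').1 h).1
  omega

lemma blockLabel_mem_Icc {p : ℕ} {σ : Fin n → ℕ} (hσ : ∀ i, σ i < p) (hc : c + m ≤ x)
    (z : Fin n × Fin m) : blockLabel x c σ z ∈ Set.Icc 1 (x * p) := by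
  have hz := z.2.is_lt
  refine ⟨by unfold blockLabel; omega, ?_⟩
  calc blockLabel x c σ z ≤ x + σ z.1 * x := by unfold blockLabel; omega
    _ = (σ z.1 + 1) * x := by ring
    _ ≤ x * p := by rw [mul_comm]; exact Nat.mul_le_mul_left x (hσ z.1)

end BlockLabel

theorem caterpillar_labels_bijective_general (p r s : ℕ) (hp : Odd p) :
    Set.BijOn
      (Sum.elim
        (fun z : Fin p × Fin r =>
          (z.2.val + 1) + z.1.val * (2 * (r + s) - 1))
        (Sum.elim
          (fun z : Fin p × Fin s =>
            (2 * r + s - 1) + (z.2.val + 1) +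
              (((p - 1) / 2 + z.1.val) % p) * (2 * (r + s) - 1))
          (fun z : Fin p × Fin (r + s - 1) =>
            r + (z.2.val + 1) +
              ((2 * p - 2 * (z.1.val + 1) + 1) % p) * (2 * (r + s) - 1))))
      Set.univ (Set.Icc 1 ((2 * (r + s) - 1) * p)) := by
  set x := 2 * (r + s) - 1 with hx
  have hu : (fun z : Fin p × Fin r => (z.2.val + 1) + z.1.val * x) =
      blockLabel x 0 Fin.val := by
    funext z; simp [blockLabel]
  rw [hu]
  have hmod : ∀ a, a % p < p := fun a => Nat.mod_lt a hp.pos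
  refine Set.bijOn_univ_Icc_of_injective (f := Sum.elim (blockLabel x 0 Fin.val)
    (Sum.elim (blockLabel x (2 * r + s - 1) fun k : Fin p => ((p - 1) / 2 + k) % p)
      (blockLabel x r fun q : Fin p => (2 * p - 2 * (q + 1) + 1) % p))) ?_ ?_ ?_
  · rintro (z | z | z)
    exacts [blockLabel_mem_Icc Fin.is_lt (by omega) z,
      blockLabel_mem_Icc (fun _ => hmod _) (by omega) z,
      blockLabel_mem_Icc (fun _ => hmod _) (by omega) z]
  · refine (injective_blockLabel Fin.val_injective (by omega)).sumElim
      ((injective_blockLabel (Nat.injective_add_mod _) (by omega)).sumElim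
        (injective_blockLabel (Nat.injective_reflect_mod_of_odd hp) (by omega))
        fun z w => (blockLabel_ne_of_le (by omega) (by omega) w z).symm) ?_
    rintro z (w | w) <;> simp only [Sum.elim_inl, Sum.elim_inr] <;>
      exact blockLabel_ne_of_le (by omega) (by omega) z w
  · have hx' : x = r + (s + (r + s - 1)) := by omega
    simp only [Fintype.card_sum, Fintype.card_prod, Fintype.card_fin, hx']
    exact le_of_eq (by ring)

/-- Let `p` be an odd positive integer, `r, s ≥ 1`, and `x = 2(r+s)−1`.
The function sending the `u`-index `(i, j)` (with `1 ≤ i ≤ p`, `1 ≤ j ≤ r`; here 0-based)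
to `j + (i−1)x`, the `v`-index `(k, ℓ)` to `(2r+s−1) + ℓ + (((p−1)/2 + k − 1) mod p)·x`,
and the `e`-index `(q, t)` to `r + t + ((2p − 2q + 1) mod p)·x`, is a bijection from the
disjoint union of the index sets onto `{1, 2, …, x·p}`. -/
theorem caterpillar_labels_bijective (p r s : ℕ) (hp : Odd p) (hp1 : 1 ≤ p)
    (hr : 1 ≤ r) (hs : 1 ≤ s) :
    Set.BijOn
      (Sum.elim
        (fun z : Fin p × Fin r =>
          (z.2.val + 1) + z.1.val * (2 * (r + s) - 1))
        (Sum.elim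
          (fun z : Fin p × Fin s =>
            (2 * r + s - 1) + (z.2.val + 1) +
              (((p - 1) / 2 + z.1.val) % p) * (2 * (r + s) - 1))
          (fun z : Fin p × Fin (r + s - 1) =>
            r + (z.2.val + 1) +
              ((2 * p - 2 * (z.1.val + 1) + 1) % p) * (2 * (r + s) - 1))))
      Set.univ (Set.Icc 1 ((2 * (r + s) - 1) * p)) :=
  caterpillar_labels_bijective_general p r s hp
end

section
/- For every integer t ≥ 0 and every odd positive integer p, the forest consisting of p pairwise disjoint copies of the star K_{1,t} admits a super edge-magic labeling. -/
/-- An edge-magic labeling of an `n`-vertex graph `G` with `m` edges and magic constant `k`: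
a bijection `f : V ∪ E → {1,…,n+m}` with `f(u)+f(v)+f(uv) = k` for every edge `uv`. -/
def IsEdgeMagicLabeling {V : Type*} [Fintype V] (G : SimpleGraph V)
    (f : V ⊕ ↥G.edgeSet → ℕ) (k : ℕ) : Prop :=
  Set.BijOn f Set.univ (Set.Icc 1 (Fintype.card V + G.edgeSet.ncard)) ∧
  ∀ (u v : V) (h : G.Adj u v),
    f (Sum.inl u) + f (Sum.inl v) + f (Sum.inr ⟨s(u, v), (G.mem_edgeSet).mpr h⟩) = k

/-- A super edge-magic labeling: an edge-magic labeling whose vertex labels are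
exactly `{1,…,n}`. -/
def IsSuperEdgeMagicLabeling {V : Type*} [Fintype V] (G : SimpleGraph V)
    (f : V ⊕ ↥G.edgeSet → ℕ) : Prop :=
  (∃ k, IsEdgeMagicLabeling G f k) ∧
  Set.range (fun v : V => f (Sum.inl v)) = Set.Icc 1 (Fintype.card V)

/-- A graph is super edge-magic if it admits a super edge-magic labeling. -/
def SuperEdgeMagic {V : Type*} [Fintype V] (G : SimpleGraph V) : Prop :=
  ∃ f, IsSuperEdgeMagicLabeling G f

/-- The constellation consisting of `p` pairwise disjoint stars, the `i`-th having `m i`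
edges: vertex `⟨i, 0⟩` is the center of the `i`-th star and `⟨i, 1⟩, …, ⟨i, m i⟩` are its
leaves. -/
def constellationGraph (p : ℕ) (m : Fin p → ℕ) :
    SimpleGraph (Σ i : Fin p, Fin (m i + 1)) where
  Adj a b := a.1 = b.1 ∧ ((a.2.val = 0 ∧ b.2.val ≠ 0) ∨ (a.2.val ≠ 0 ∧ b.2.val = 0))
  symm := by constructor; rintro ⟨i, x⟩ ⟨j, y⟩ ⟨h1, h2⟩; exact ⟨h1.symm, by tauto⟩
  loopless := by constructor; rintro ⟨i, x⟩ ⟨-, h⟩; tauto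

/-!
A graph with `n` vertices and `m` edges is super edge-magic as soon as its vertices can be
labelled bijectively by `1, …, n` so that the edge sums `g u + g v` are `m` consecutive integers
`s, …, s + m - 1`: the edge `uv` then gets the label `n + m + s - g u - g v`.

For `p = 2q + 1` stars `K_{1,t}`, label the center of star `i` by `i + 1` and its `j`-th leaf by
`p j + 1 + ((i + q) mod p)`. Both the vertex labels and the edge sums are then read in base `p`:
the edge to the `j`-th leaf of star `i` has sum `p (j - 1) + 3q + 3 + (2i mod p)`, and `i ↦ 2i mod p`
permutes `{0, …, p - 1}` because `p` is odd, so the edge sums are the `pt` integers from `3q + 3` on.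
-/

open Set Function

def edgeSum {V : Type*} (g : V → ℕ) : Sym2 V → ℕ :=
  Sym2.lift ⟨fun u v => g u + g v, fun _ _ => add_comm _ _⟩

theorem superEdgeMagic_of_bijOn_edgeSum {V : Type*} [Fintype V] (G : SimpleGraph V)
    {g : V → ℕ} {n s m : ℕ} (hg : BijOn g univ (Icc 1 n))
    (hS : BijOn (edgeSum g) G.edgeSet (Ico s (s + m))) : SuperEdgeMagic G := by
  have hn : Fintype.card V = n := by simpa using hg.ncard_eq
  have hm : G.edgeSet.ncard = m := by simpa using hS.ncard_eq
  have hSlt : ∀ e : G.edgeSet, s ≤ edgeSum g e ∧ edgeSum g e < s + m := fun e => hS.mapsTo e.2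
  refine ⟨Sum.elim g (fun e => n + m + s - edgeSum g e), ⟨n + m + s, ⟨?_, ?_, ?_⟩, ?_⟩, ?_⟩
  · rintro (u | e) -
    · have := hg.mapsTo (mem_univ u)
      simp only [mem_Icc, Sum.elim_inl] at this ⊢
      omega
    · have := hSlt e
      simp only [mem_Icc, Sum.elim_inr]
      omega
  · rintro (u | e) - (v | e') - h
    · exact congrArg Sum.inl (hg.injOn (mem_univ u) (mem_univ v) h)
    · have hu := hg.mapsTo (mem_univ u)
      have := hSlt e'
      simp only [mem_Icc, Sum.elim_inl, Sum.elim_inr] at hu h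
      omega
    · have hv := hg.mapsTo (mem_univ v)
      have := hSlt e
      simp only [mem_Icc, Sum.elim_inl, Sum.elim_inr] at hv h
      omega
    · have he := hSlt e
      have he' := hSlt e'
      simp only [Sum.elim_inr] at h
      exact congrArg Sum.inr (Subtype.ext (hS.injOn e.2 e'.2 (by omega)))
  · intro y hy
    rw [hn, hm, mem_Icc] at hy
    rcases le_or_gt y n with hyn | hyn
    · obtain ⟨u, -, hu⟩ := hg.surjOn (mem_Icc.2 ⟨hy.1, hyn⟩)
      exact ⟨Sum.inl u, mem_univ _, hu⟩
    · obtain ⟨e, he, hSe⟩ :=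
        hS.surjOn (show n + m + s - y ∈ Ico s (s + m) from mem_Ico.2 (by omega))
      exact ⟨Sum.inr ⟨e, he⟩, mem_univ _, by simp only [Sum.elim_inr, hSe]; omega⟩
  · intro u v huv
    have := hSlt ⟨s(u, v), huv⟩
    simp only [Sum.elim_inl, Sum.elim_inr] at this ⊢
    exact Nat.add_sub_of_le (by simp only [edgeSum, Sym2.lift_mk] at this ⊢; omega)
  · rw [hn, ← image_univ]
    exact hg.image_eq

theorem bijOn_univ_of_injective_of_ncard_le {α β : Type*} [Finite α] {f : α → β} {t : Set β}
    (ht : t.Finite) (hf : Injective f) (hmaps : ∀ a, f a ∈ t) (hcard : t.ncard ≤ Nat.card α) :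
    BijOn f univ t := by
  refine ⟨fun a _ => hmaps a, hf.injOn, ?_⟩
  rw [SurjOn, image_univ]
  refine (eq_of_subset_of_ncard_le (range_subset_iff.2 hmaps) ?_ ht).ge
  rwa [← image_univ, ncard_image_of_injective _ hf, ncard_univ]

theorem bijOn_mul_add_of_injective {p T a : ℕ} {ρ : Fin T → Fin p → ℕ}
    (hρ : ∀ j, Injective (ρ j)) (hρa : ∀ j i, ρ j i ∈ Ico a (a + p)) :
    BijOn (fun x : (Σ _ : Fin p, Fin T) => p * x.2 + ρ x.2 x.1) univ (Ico a (a + p * T)) := by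
  have hdiv : ∀ x : (Σ _ : Fin p, Fin T), (p * x.2 + ρ x.2 x.1 - a) / p = x.2 := by
    rintro ⟨i, j⟩
    have := hρa j i
    rw [mem_Ico] at this
    rw [show p * j + ρ j i - a = p * j + (ρ j i - a) by omega, Nat.mul_add_div i.pos,
      Nat.div_eq_of_lt (by omega), add_zero]
  refine bijOn_univ_of_injective_of_ncard_le (finite_Ico _ _) ?_ ?_ ?_
  · rintro ⟨i, j⟩ ⟨i', j'⟩ h
    obtain rfl : j = j' := Fin.ext <|
      (hdiv ⟨i, j⟩).symm.trans ((congrArg (fun y => (y - a) / p) h).trans (hdiv ⟨i', j'⟩))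
    obtain rfl := hρ j (by simpa using h)
    rfl
  · rintro ⟨i, j⟩
    have hji := hρa j i
    have hjT : p * (j + 1) ≤ p * T := Nat.mul_le_mul_left p j.isLt
    simp only [mem_Ico] at hji ⊢
    rw [mul_add] at hjT
    omega
  · simp

theorem injective_mul_add_mod {p a : ℕ} (ha : a.Coprime p) (b : ℕ) :
    Injective (fun i : Fin p => (a * i + b) % p) := fun i i' h =>
  Fin.ext (((Nat.ModEq.add_right_cancel' b h).cancel_left_of_coprime ha.symm).eq_of_lt_of_lt
    i.isLt i'.isLt)

theorem add_add_mod_eq_add_two_mul_mod {q i : ℕ} (hi : i < 2 * q + 1) :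
    i + (i + q) % (2 * q + 1) = q + 2 * i % (2 * q + 1) := by
  rcases le_or_gt i q with h | h
  · rw [Nat.mod_eq_of_lt (by omega), Nat.mod_eq_of_lt (by omega)]
    omega
  · rw [Nat.mod_eq_sub_mod (by omega), Nat.mod_eq_of_lt (by omega), Nat.mod_eq_sub_mod (by omega),
      Nat.mod_eq_of_lt (by omega)]
    omega

def starEdge {p t : ℕ} (x : Σ _ : Fin p, Fin t) : Sym2 (Σ _ : Fin p, Fin (t + 1)) :=
  s(⟨x.1, 0⟩, ⟨x.1, x.2.succ⟩)

theorem starEdge_bijOn (p t : ℕ) :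
    BijOn starEdge univ (constellationGraph p (fun _ => t)).edgeSet := by
  refine ⟨fun x _ => ⟨rfl, Or.inl ⟨rfl, x.2.val.succ_ne_zero⟩⟩, ?_, ?_⟩
  · rintro ⟨i, j⟩ - ⟨i', j'⟩ - h
    obtain ⟨rfl, rfl⟩ : i = i' ∧ j = j' := by simpa [starEdge] using h
    rfl
  · intro e he
    induction e using Sym2.ind with
    | _ a b =>
      obtain ⟨i, j⟩ := a
      obtain ⟨i', j'⟩ := b
      obtain ⟨rfl : i = i', hj | hj⟩ := he
      · obtain rfl : j = 0 := Fin.ext hj.1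
        refine ⟨⟨i, j'.pred (Fin.ne_of_val_ne hj.2)⟩, mem_univ _, ?_⟩
        simp [starEdge]
      · obtain rfl : j' = 0 := Fin.ext hj.2
        refine ⟨⟨i, j.pred (Fin.ne_of_val_ne hj.1)⟩, mem_univ _, ?_⟩
        simp [starEdge, Sym2.eq_swap]

section StarForest

variable (q t : ℕ)

def starForestLabel (x : Σ _ : Fin (2 * q + 1), Fin (t + 1)) : ℕ :=
  (2 * q + 1) * x.2 + (1 + ((x.1 : ℕ) + if x.2 = 0 then 0 else q) % (2 * q + 1))

theorem starForestLabel_bijOn :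
    BijOn (starForestLabel q t) univ (Icc 1 ((2 * q + 1) * (t + 1))) := by
  rw [← Ico_add_one_right_eq_Icc, add_comm ((2 * q + 1) * (t + 1))]
  refine bijOn_mul_add_of_injective
    (ρ := fun j i => 1 + ((i : ℕ) + if j = 0 then 0 else q) % (2 * q + 1))
    (fun j => ?_) (fun j i => ?_)
  · exact (add_right_injective 1).comp
      (by simpa using injective_mul_add_mod (Nat.coprime_one_left _) _)
  · have := Nat.mod_lt ((i : ℕ) + if j = 0 then 0 else q) (by omega : 2 * q + 1 > 0)
    simp only [mem_Ico]
    omega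

theorem edgeSum_starForestLabel_starEdge (x : Σ _ : Fin (2 * q + 1), Fin t) :
    edgeSum (starForestLabel q t) (starEdge x) =
      (2 * q + 1) * x.2 + (3 * q + 3 + 2 * x.1 % (2 * q + 1)) := by
  have key := add_add_mod_eq_add_two_mul_mod x.1.isLt
  simp only [edgeSum, starForestLabel, starEdge, Sym2.lift_mk, Fin.coe_ofNat_eq_mod, Nat.zero_mod,
    mul_zero, ↓reduceIte, add_zero, Nat.mod_eq_of_lt x.1.isLt, zero_add, Fin.val_succ,
    Fin.succ_ne_zero]
  rw [mul_add]
  omega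

theorem edgeSum_starForestLabel_bijOn :
    BijOn (edgeSum (starForestLabel q t)) (constellationGraph (2 * q + 1) (fun _ => t)).edgeSet
      (Ico (3 * q + 3) (3 * q + 3 + (2 * q + 1) * t)) := by
  rw [← (starEdge_bijOn _ _).image_eq, ← bijOn_comp_iff (starEdge_bijOn _ _).injOn]
  refine (bijOn_mul_add_of_injective (ρ := fun _ i => 3 * q + 3 + 2 * (i : ℕ) % (2 * q + 1))
    (fun _ => ?_) (fun _ i => ?_)).congr
    (fun x _ => (edgeSum_starForestLabel_starEdge q t x).symm)
  · exact (add_right_injective _).comp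
      (injective_mul_add_mod (Nat.coprime_two_left.2 (odd_two_mul_add_one q)) 0)
  · have := Nat.mod_lt (2 * (i : ℕ)) (by omega : 2 * q + 1 > 0)
    simp only [mem_Ico]
    omega

end StarForest

/-- For every integer `t ≥ 0` and every odd positive integer `p`, the
forest consisting of `p` pairwise disjoint copies of the star `K_{1,t}` admits a super
edge-magic labeling. -/
theorem super_edge_magic_copies_of_star (t p : ℕ) (hp : Odd p) :
    SuperEdgeMagic (constellationGraph p (fun _ => t)) := by
  obtain ⟨q, rfl⟩ := hp
  exact superEdgeMagic_of_bijOn_edgeSum _ (starForestLabel_bijOn q t)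
    (edgeSum_starForestLabel_bijOn q t)
end
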